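/- Fix h ∈ (0, 1/2) and α₁, α₂ > 0. For each α > 0 there exists R_α > ρ_h(α) such that H_α^h is strictly increasing on [R_α, +∞) and tends to +∞, so for every sufficiently large t there is a unique ρ_{α,t} ≥ R_α with H_α^h(ρ_{α,t}) = t. Then lim_{t→+∞} ( ρ_{α₁,t} − ρ_{α₂,t} ) = ( k_{α₂}^h − k_{α₁}^h )/c_h, where c_h = 2h/√(1 − 4h²) and k_α^h = lim_{ρ→+∞}( H_α^h(ρ) − c_h·ρ ). In particular the asymptotic horizontal distance d_∞(H_{α₁}^h, H_{α₂}^h) = lim_{t→+∞} | ρ_{α₁,t} − ρ_{α₂,t} | equals | k_{α₂}^h − k_{α₁}^h |/c_h. -/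

import Mathlib

/-
The radicand of `u_α^h` factors as
`sinh² ρ − (2h cosh ρ − α)² = (1 − 4h²)(cosh ρ − φ)(cosh ρ − b)` with `b < φ = cosh ρ_h(α)`,
so by convexity of `cosh` it is at least a constant times `sinh ρ_h(α) · (ρ − ρ_h(α))`, while the
numerator is `sinh ρ_h(α) + O(cosh ρ − φ)` near `ρ_h(α)`. Hence
`|u_α^h| ≤ A + B (ρ − ρ_h(α))^(−1/2)`, an integrable singularity, and `H_α^h` is continuous on
`[ρ_h(α), ∞)`. Once `h cosh ρ ≥ α` we have `u_α^h ≥ h`, so `H_α^h` eventually grows at least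
like `hρ`: it is strictly increasing, onto a half-line, and every inverse branch `ρ_{α,t}` tends
to `+∞`. Substituting `ρ = ρ_{α,t}` in `H_α^h(ρ) − c_h ρ → k_α^h` gives
`t − c_h ρ_{α,t} → k_α^h`, and subtracting the two relations gives the limit.
-/

open Real Set Filter MeasureTheory

/-- Inverse hyperbolic cosine. -/
noncomputable def arcosh (x : ℝ) : ℝ := Real.log (x + Real.sqrt (x ^ 2 - 1))

/-- The root `φ(h,α)` of the quadratic `(s² − 1) − (2hs − α)²`. -/
noncomputable def phi (h α : ℝ) : ℝ :=
  (-2 * α * h + Real.sqrt (1 - 4 * h ^ 2 + α ^ 2)) / (1 - 4 * h ^ 2)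

/-- The negative root `b(h,α)` of the quadratic `(s² − 1) − (2hs − α)²`. -/
noncomputable def bb (h α : ℝ) : ℝ :=
  -(2 * h * α + Real.sqrt (1 - 4 * h ^ 2 + α ^ 2)) / (1 - 4 * h ^ 2)

/-- The radius `ρ_h(α)` of the base circle of the rotational cmc `h` surface `H_α^h`. -/
noncomputable def rho (h α : ℝ) : ℝ := _root_.arcosh (phi h α)

/-- The derivative `u_α^h` of the profile function of `H_α^h`. -/
noncomputable def uu (h α ρ : ℝ) : ℝ :=
  (-α + 2 * h * Real.cosh ρ) /
    Real.sqrt (Real.sinh ρ ^ 2 - (-α + 2 * h * Real.cosh ρ) ^ 2)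

/-- The profile function `H_α^h` of the rotational cmc `h` surfaces of Sa Earp–Toubiana. -/
noncomputable def HH (h α ρ : ℝ) : ℝ := ∫ w in rho h α..ρ, uu h α w

open Topology

lemma Real.sinh_mul_sub_le_cosh_sub_cosh {x y : ℝ} (hxy : x ≤ y) :
    sinh x * (y - x) ≤ cosh y - cosh x := by
  refine (convex_Ici x).mul_sub_le_image_sub_of_le_deriv continuous_cosh.continuousOn
    differentiable_cosh.differentiableOn (fun z hz => ?_) x self_mem_Ici y hxy hxy
  rw [interior_Ici, mem_Ioi] at hz
  rw [Real.deriv_cosh]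
  exact sinh_le_sinh.2 hz.le

lemma Real.tendsto_cosh_atTop : Tendsto cosh atTop atTop :=
  tendsto_atTop_mono (fun w => by rw [cosh_eq]; linarith [exp_pos (-w)])
    (tendsto_exp_atTop.atTop_div_const two_pos)

lemma tendsto_sub_of_tendsto_sub_mul {f₁ f₂ r₁ r₂ : ℝ → ℝ} {c k₁ k₂ : ℝ} (hc : c ≠ 0)
    (hf₁ : Tendsto (fun ρ => f₁ ρ - c * ρ) atTop (𝓝 k₁))
    (hf₂ : Tendsto (fun ρ => f₂ ρ - c * ρ) atTop (𝓝 k₂))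
    (hr₁ : Tendsto r₁ atTop atTop) (hr₂ : Tendsto r₂ atTop atTop)
    (h₁ : ∀ᶠ t in atTop, f₁ (r₁ t) = t) (h₂ : ∀ᶠ t in atTop, f₂ (r₂ t) = t) :
    Tendsto (fun t => r₁ t - r₂ t) atTop (𝓝 ((k₂ - k₁) / c)) := by
  refine (((hf₂.comp hr₂).sub (hf₁.comp hr₁)).div_const c).congr' ?_
  filter_upwards [h₁, h₂] with t ht₁ ht₂
  simp only [Function.comp_apply, ht₁, ht₂]
  field_simp
  ring

lemma one_sub_four_mul_sq_pos {h : ℝ} (hh : h ∈ Ioo (0 : ℝ) (1 / 2)) :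
    0 < 1 - 4 * h ^ 2 := by
  obtain ⟨h₀, h₁⟩ := hh
  nlinarith

section Profile

variable {h α : ℝ}

lemma sinh_sq_sub_sq_eq_mul (hh : h ∈ Ioo (0 : ℝ) (1 / 2)) (w : ℝ) :
    sinh w ^ 2 - (-α + 2 * h * cosh w) ^ 2
      = (1 - 4 * h ^ 2) * (cosh w - phi h α) * (cosh w - bb h α) := by
  have hq := one_sub_four_mul_sq_pos hh
  have hs : √(1 - 4 * h ^ 2 + α ^ 2) ^ 2 = 1 - 4 * h ^ 2 + α ^ 2 :=
    sq_sqrt (by nlinarith [sq_nonneg α])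
  rw [sinh_sq, phi, bb]
  set q := 1 - 4 * h ^ 2 with hq_def
  field_simp
  linear_combination hs - (cosh w ^ 2 * q + α ^ 2) * hq_def

lemma bb_lt_phi (hh : h ∈ Ioo (0 : ℝ) (1 / 2)) : bb h α < phi h α := by
  have hs : 0 < √(1 - 4 * h ^ 2 + α ^ 2) :=
    sqrt_pos.2 (by nlinarith [one_sub_four_mul_sq_pos hh, sq_nonneg α])
  rw [bb, phi, div_lt_div_iff_of_pos_right (one_sub_four_mul_sq_pos hh)]
  linarith

lemma one_le_phi (hh : h ∈ Ioo (0 : ℝ) (1 / 2)) : 1 ≤ phi h α := by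
  have hq := one_sub_four_mul_sq_pos hh
  have hs : √(1 - 4 * h ^ 2 + α ^ 2) ^ 2 = 1 - 4 * h ^ 2 + α ^ 2 :=
    sq_sqrt (by nlinarith [sq_nonneg α])
  rw [phi, le_div_iff₀ hq]
  nlinarith [sq_nonneg (2 * h - α), sqrt_nonneg (1 - 4 * h ^ 2 + α ^ 2),
    sq_nonneg (√(1 - 4 * h ^ 2 + α ^ 2) - (1 - 4 * h ^ 2) - 2 * α * h)]

-- `_root_.arcosh` in the definition of `rho` is definitionally `Real.arcosh`.
lemma cosh_rho (hh : h ∈ Ioo (0 : ℝ) (1 / 2)) : cosh (rho h α) = phi h α :=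
  Real.cosh_arcosh (one_le_phi hh)

lemma rho_nonneg (hh : h ∈ Ioo (0 : ℝ) (1 / 2)) : 0 ≤ rho h α :=
  Real.arcosh_nonneg (one_le_phi hh)

lemma phi_le_cosh (hh : h ∈ Ioo (0 : ℝ) (1 / 2)) {w : ℝ} (hw : rho h α ≤ w) :
    phi h α ≤ cosh w := by
  have h₀ := rho_nonneg (α := α) hh
  rw [← cosh_rho hh, cosh_le_cosh, abs_of_nonneg h₀, abs_of_nonneg (h₀.trans hw)]
  exact hw

lemma phi_lt_cosh (hh : h ∈ Ioo (0 : ℝ) (1 / 2)) {w : ℝ} (hw : rho h α < w) :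
    phi h α < cosh w := by
  have h₀ := rho_nonneg (α := α) hh
  rw [← cosh_rho hh, cosh_lt_cosh, abs_of_nonneg h₀, abs_of_nonneg (h₀.trans hw.le)]
  exact hw

lemma abs_two_mul_phi_sub_eq_sinh_rho (hh : h ∈ Ioo (0 : ℝ) (1 / 2)) :
    |2 * h * phi h α - α| = sinh (rho h α) := by
  have hzero := sinh_sq_sub_sq_eq_mul (α := α) hh (rho h α)
  rw [cosh_rho hh, sub_self, mul_zero, zero_mul, sub_eq_zero] at hzero
  rw [← sq_eq_sq₀ (abs_nonneg _) (sinh_nonneg_iff.2 (rho_nonneg hh)), sq_abs, hzero]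
  ring

lemma mul_cosh_sub_phi_le_sinh_sq_sub_sq (hh : h ∈ Ioo (0 : ℝ) (1 / 2)) {w : ℝ}
    (hw : rho h α ≤ w) :
    (1 - 4 * h ^ 2) * (phi h α - bb h α) * (cosh w - phi h α)
      ≤ sinh w ^ 2 - (-α + 2 * h * cosh w) ^ 2 := by
  rw [sinh_sq_sub_sq_eq_mul hh, mul_right_comm]
  have hφ := phi_le_cosh hh hw
  exact mul_le_mul_of_nonneg_left (by linarith)
    (mul_nonneg (one_sub_four_mul_sq_pos hh).le (sub_nonneg.2 hφ))

lemma exists_abs_uu_le (hh : h ∈ Ioo (0 : ℝ) (1 / 2)) (x : ℝ) :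
    ∃ A B : ℝ, ∀ w ∈ Ioc (rho h α) x,
      |uu h α w| ≤ A + B * (w - rho h α) ^ (-(1 / 2) : ℝ) := by
  set ρ₀ := rho h α
  set φ := phi h α
  set σ := sinh ρ₀
  have hq := one_sub_four_mul_sq_pos hh
  have hρ₀ : 0 ≤ ρ₀ := rho_nonneg hh
  have hcosh : cosh ρ₀ = φ := cosh_rho hh
  have hnum : |2 * h * φ - α| = σ := abs_two_mul_phi_sub_eq_sinh_rho hh
  have hφb : 0 < φ - bb h α := sub_pos.2 (bb_lt_phi hh)
  set K := √((1 - 4 * h ^ 2) * (φ - bb h α))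
  have hK : 0 < K := sqrt_pos.2 (mul_pos hq hφb)
  have hσ : 0 ≤ σ := sinh_nonneg_iff.2 hρ₀
  refine ⟨2 * h / K * √(cosh x - φ), √σ / K, fun w ⟨hw, hwx⟩ => ?_⟩
  have hs : 0 < cosh w - φ := sub_pos.2 (phi_lt_cosh hh hw)
  have hKs : K * √(cosh w - φ) ≤ √(sinh w ^ 2 - (-α + 2 * h * cosh w) ^ 2) := by
    rw [← sqrt_mul (mul_nonneg hq.le hφb.le)]
    exact sqrt_le_sqrt (mul_cosh_sub_phi_le_sinh_sq_sub_sq hh hw.le)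
  have hN : |-α + 2 * h * cosh w| ≤ 2 * h * (cosh w - φ) + σ := by
    calc |-α + 2 * h * cosh w| = |2 * h * (cosh w - φ) + (2 * h * φ - α)| := by ring_nf
      _ ≤ |2 * h * (cosh w - φ)| + |2 * h * φ - α| := abs_add_le _ _
      _ = 2 * h * (cosh w - φ) + σ := by rw [abs_of_nonneg (by nlinarith [hh.1]), hnum]
  have hsx : √(cosh w - φ) ≤ √(cosh x - φ) := by
    refine sqrt_le_sqrt (sub_le_sub_right ?_ φ)
    rw [cosh_le_cosh, abs_of_nonneg (by linarith), abs_of_nonneg (by linarith)]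
    exact hwx
  have hσs : √σ / √(cosh w - φ) ≤ (w - ρ₀) ^ (-(1 / 2) : ℝ) := by
    have hconv : σ * (w - ρ₀) ≤ cosh w - φ :=
      hcosh ▸ Real.sinh_mul_sub_le_cosh_sub_cosh hw.le
    rw [rpow_neg (by linarith), ← sqrt_eq_rpow, div_le_iff₀ (sqrt_pos.2 hs), ← div_eq_inv_mul,
      le_div_iff₀ (sqrt_pos.2 (by linarith)), ← sqrt_mul hσ]
    exact sqrt_le_sqrt hconv
  calc |uu h α w|
        = |-α + 2 * h * cosh w| / √(sinh w ^ 2 - (-α + 2 * h * cosh w) ^ 2) := by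
        rw [uu, abs_div, abs_of_nonneg (sqrt_nonneg _)]
    _ ≤ (2 * h * (cosh w - φ) + σ) / (K * √(cosh w - φ)) :=
        div_le_div₀ (by nlinarith [hh.1]) hN (by positivity) hKs
    _ = 2 * h / K * ((cosh w - φ) / √(cosh w - φ)) + √σ / K * (√σ / √(cosh w - φ)) := by
        rw [div_mul_div_comm √σ, mul_self_sqrt hσ]
        ring
    _ ≤ 2 * h / K * √(cosh x - φ) + √σ / K * (w - ρ₀) ^ (-(1 / 2) : ℝ) := by
        rw [div_sqrt]
        have : 0 ≤ 2 * h / K := div_nonneg (by linarith [hh.1]) hK.le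
        gcongr

lemma measurable_uu : Measurable (uu h α) := by
  unfold uu
  fun_prop

lemma intervalIntegrable_uu (hh : h ∈ Ioo (0 : ℝ) (1 / 2)) {x : ℝ}
    (hx : rho h α ≤ x) : IntervalIntegrable (uu h α) volume (rho h α) x := by
  obtain ⟨A, B, hbound⟩ := exists_abs_uu_le (α := α) hh x
  have hdom : IntervalIntegrable (fun w => A + B * (w - rho h α) ^ (-(1 / 2) : ℝ))
      volume (rho h α) x := by
    refine intervalIntegrable_const.add (IntervalIntegrable.const_mul ?_ B)
    simpa using (intervalIntegral.intervalIntegrable_rpow' (r := -(1 / 2)) (by norm_num)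
      (a := 0) (b := x - rho h α)).comp_sub_right (rho h α)
  refine hdom.mono_fun' measurable_uu.aestronglyMeasurable ?_
  rw [uIoc_of_le hx]
  exact ae_restrict_of_forall_mem measurableSet_Ioc hbound

lemma continuousOn_HH (hh : h ∈ Ioo (0 : ℝ) (1 / 2)) :
    ContinuousOn (HH h α) (Ici (rho h α)) := by
  intro x hx
  have hx' : rho h α ≤ x + 1 := by linarith [mem_Ici.1 hx]
  have hIcc : ContinuousOn (HH h α) (Icc (rho h α) (x + 1)) := by
    have := intervalIntegral.continuousOn_primitive_interval'
      (intervalIntegrable_uu hh hx') left_mem_uIcc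
    rwa [uIcc_of_le hx'] at this
  rw [← Ici_inter_Iic] at hIcc
  exact (continuousWithinAt_inter (Iic_mem_nhds (lt_add_one x))).1
    (hIcc x ⟨hx, by simp⟩)

lemma HH_sub_HH_eq_integral (hh : h ∈ Ioo (0 : ℝ) (1 / 2)) {x y : ℝ} (hx : rho h α ≤ x)
    (hy : rho h α ≤ y) : HH h α y - HH h α x = ∫ w in x..y, uu h α w :=
  intervalIntegral.integral_interval_sub_left (intervalIntegrable_uu hh hy)
    (intervalIntegrable_uu hh hx)

lemma le_uu (hh : h ∈ Ioo (0 : ℝ) (1 / 2)) {w : ℝ} (hw : rho h α < w)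
    (hαw : α ≤ h * cosh w) : h ≤ uu h α w := by
  have hDpos : 0 < sinh w ^ 2 - (-α + 2 * h * cosh w) ^ 2 := by
    rw [sinh_sq_sub_sq_eq_mul hh]
    have hφ := phi_lt_cosh hh hw
    have hb := bb_lt_phi (α := α) hh
    exact mul_pos (mul_pos (one_sub_four_mul_sq_pos hh) (by linarith)) (by linarith)
  have hsqrt : √(sinh w ^ 2 - (-α + 2 * h * cosh w) ^ 2) ≤ cosh w := by
    rw [sqrt_le_left (cosh_pos w).le]
    nlinarith [cosh_sq w, sq_nonneg (-α + 2 * h * cosh w)]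
  rw [uu, le_div_iff₀ (sqrt_pos.2 hDpos)]
  nlinarith [hh.1]

lemma mul_sub_le_HH_sub_HH (hh : h ∈ Ioo (0 : ℝ) (1 / 2)) {R x y : ℝ} (hR : rho h α ≤ R)
    (huu : ∀ w, R ≤ w → h ≤ uu h α w) (hx : R ≤ x) (hxy : x ≤ y) :
    h * (y - x) ≤ HH h α y - HH h α x := by
  have hint : IntervalIntegrable (uu h α) volume x y :=
    (intervalIntegrable_uu hh (hR.trans (hx.trans hxy))).mono_set
      (uIcc_subset_uIcc (mem_uIcc_of_le (hR.trans hx) hxy) right_mem_uIcc)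
  rw [HH_sub_HH_eq_integral hh (hR.trans hx) (hR.trans (hx.trans hxy))]
  calc h * (y - x) = ∫ _ in x..y, h := by simp [mul_comm]
    _ ≤ ∫ w in x..y, uu h α w :=
      intervalIntegral.integral_mono_on hxy intervalIntegrable_const hint
        fun w hw => huu w (hx.trans hw.1)

lemma exists_HH_strictMonoOn_tendsto (hh : h ∈ Ioo (0 : ℝ) (1 / 2)) :
    ∃ R : ℝ, rho h α < R ∧ StrictMonoOn (HH h α) (Ici R) ∧ Tendsto (HH h α) atTop atTop ∧
      ∃ T : ℝ, ∀ t : ℝ, T ≤ t → ∃! ρ : ℝ, R ≤ ρ ∧ HH h α ρ = t := by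
  obtain ⟨R, hR⟩ := eventually_atTop.1 ((eventually_gt_atTop (rho h α)).and
    (Real.tendsto_cosh_atTop.eventually_ge_atTop (α / h)))
  have hρR : rho h α < R := (hR R le_rfl).1
  have huu : ∀ w, R ≤ w → h ≤ uu h α w := fun w hw =>
    le_uu hh (hR w hw).1 ((div_le_iff₀' hh.1).1 (hR w hw).2)
  have hgrow : ∀ {x y}, R ≤ x → x ≤ y → h * (y - x) ≤ HH h α y - HH h α x :=
    mul_sub_le_HH_sub_HH hh hρR.le huu
  have hmono : StrictMonoOn (HH h α) (Ici R) := fun x hx y _ hxy => by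
    nlinarith [hgrow hx hxy.le, hh.1]
  have htop : Tendsto (HH h α) atTop atTop := by
    refine tendsto_atTop_mono' _ ?_ (tendsto_atTop_add_const_right _ (HH h α R - h * R)
      (tendsto_id.const_mul_atTop hh.1))
    filter_upwards [eventually_ge_atTop R] with w hw
    show h * w + (HH h α R - h * R) ≤ HH h α w
    linarith [hgrow le_rfl hw]
  have hcont : ContinuousOn (HH h α) (Ici R) :=
    (continuousOn_HH hh).mono (Ici_subset_Ici.2 hρR.le)
  refine ⟨R, hρR, hmono, htop, HH h α R, fun t ht => ?_⟩
  obtain ⟨ρ, hρR, hρt⟩ := intermediate_value_Ici hcont htop ht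
  exact ⟨ρ, ⟨hρR, hρt⟩, fun ρ' hρ' => hmono.injOn hρ'.1 hρR (hρ'.2.trans hρt.symm)⟩

lemma tendsto_atTop_of_HH_eq (hh : h ∈ Ioo (0 : ℝ) (1 / 2)) {r : ℝ → ℝ}
    (hr : ∀ᶠ t in atTop, rho h α < r t ∧ HH h α (r t) = t) : Tendsto r atTop atTop := by
  refine tendsto_atTop.2 fun b => ?_
  obtain ⟨K, hK⟩ : BddAbove (HH h α '' Icc (rho h α) b) :=
    isCompact_Icc.bddAbove_image ((continuousOn_HH hh).mono Icc_subset_Ici_self)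
  filter_upwards [hr, eventually_gt_atTop K] with t ⟨hρ, ht⟩ hKt
  by_contra! hb
  exact hKt.not_ge (ht ▸ hK (mem_image_of_mem _ ⟨hρ.le, hb.le⟩))

end Profile

theorem stmt_18_general (h α₁ α₂ : ℝ) (hh : h ∈ Set.Ioo (0 : ℝ) (1 / 2)) :
    (∀ α : ℝ, 0 < α → ∃ R : ℝ, rho h α < R ∧
      StrictMonoOn (HH h α) (Set.Ici R) ∧
      Filter.Tendsto (HH h α) Filter.atTop Filter.atTop ∧
      ∃ T : ℝ, ∀ t : ℝ, T ≤ t → ∃! ρ : ℝ, R ≤ ρ ∧ HH h α ρ = t) ∧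
    (∀ k₁ k₂ : ℝ,
      Filter.Tendsto (fun ρ => HH h α₁ ρ - 2 * h / Real.sqrt (1 - 4 * h ^ 2) * ρ)
        Filter.atTop (nhds k₁) →
      Filter.Tendsto (fun ρ => HH h α₂ ρ - 2 * h / Real.sqrt (1 - 4 * h ^ 2) * ρ)
        Filter.atTop (nhds k₂) →
      ∀ r₁ r₂ : ℝ → ℝ, ∀ T : ℝ,
        (∀ t : ℝ, T ≤ t → rho h α₁ < r₁ t ∧ HH h α₁ (r₁ t) = t) →
        (∀ t : ℝ, T ≤ t → rho h α₂ < r₂ t ∧ HH h α₂ (r₂ t) = t) →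
        Filter.Tendsto (fun t => r₁ t - r₂ t) Filter.atTop
          (nhds ((k₂ - k₁) / (2 * h / Real.sqrt (1 - 4 * h ^ 2)))) ∧
        Filter.Tendsto (fun t => |r₁ t - r₂ t|) Filter.atTop
          (nhds (|k₂ - k₁| / (2 * h / Real.sqrt (1 - 4 * h ^ 2))))) := by
  refine ⟨fun α _ => exists_HH_strictMonoOn_tendsto hh,
    fun k₁ k₂ hk₁ hk₂ r₁ r₂ T hr₁ hr₂ => ?_⟩
  have hc : 0 < 2 * h / √(1 - 4 * h ^ 2) :=
    div_pos (by linarith [hh.1]) (sqrt_pos.2 (one_sub_four_mul_sq_pos hh))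
  have hr₁' := eventually_atTop.2 ⟨T, hr₁⟩
  have hr₂' := eventually_atTop.2 ⟨T, hr₂⟩
  have hlim := tendsto_sub_of_tendsto_sub_mul hc.ne' hk₁ hk₂
    (tendsto_atTop_of_HH_eq hh hr₁') (tendsto_atTop_of_HH_eq hh hr₂')
    (hr₁'.mono fun _ => And.right) (hr₂'.mono fun _ => And.right)
  refine ⟨hlim, ?_⟩
  rw [← abs_of_pos hc, ← abs_div]
  exact hlim.abs

/-- each H_α^h is eventually strictly increasing to +∞, so for large t
the equation H_α^h(ρ) = t has a unique large solution ρ_{α,t}; moreover for any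
inverse branches r₁, r₂ of H_{α₁}^h, H_{α₂}^h one has
ρ_{α₁,t} − ρ_{α₂,t} → (k_{α₂}^h − k_{α₁}^h)/c_h, and the asymptotic horizontal
distance is |k_{α₂}^h − k_{α₁}^h|/c_h. -/
theorem stmt_18 (h α₁ α₂ : ℝ) (hh : h ∈ Set.Ioo (0 : ℝ) (1 / 2))
    (hα₁ : 0 < α₁) (hα₂ : 0 < α₂) :
    (∀ α : ℝ, 0 < α → ∃ R : ℝ, rho h α < R ∧
      StrictMonoOn (HH h α) (Set.Ici R) ∧
      Filter.Tendsto (HH h α) Filter.atTop Filter.atTop ∧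
      ∃ T : ℝ, ∀ t : ℝ, T ≤ t → ∃! ρ : ℝ, R ≤ ρ ∧ HH h α ρ = t) ∧
    (∀ k₁ k₂ : ℝ,
      Filter.Tendsto (fun ρ => HH h α₁ ρ - 2 * h / Real.sqrt (1 - 4 * h ^ 2) * ρ)
        Filter.atTop (nhds k₁) →
      Filter.Tendsto (fun ρ => HH h α₂ ρ - 2 * h / Real.sqrt (1 - 4 * h ^ 2) * ρ)
        Filter.atTop (nhds k₂) →
      ∀ r₁ r₂ : ℝ → ℝ, ∀ T : ℝ,
        (∀ t : ℝ, T ≤ t → rho h α₁ < r₁ t ∧ HH h α₁ (r₁ t) = t) →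
        (∀ t : ℝ, T ≤ t → rho h α₂ < r₂ t ∧ HH h α₂ (r₂ t) = t) →
        Filter.Tendsto (fun t => r₁ t - r₂ t) Filter.atTop
          (nhds ((k₂ - k₁) / (2 * h / Real.sqrt (1 - 4 * h ^ 2)))) ∧
        Filter.Tendsto (fun t => |r₁ t - r₂ t|) Filter.atTop
          (nhds (|k₂ - k₁| / (2 * h / Real.sqrt (1 - 4 * h ^ 2))))) :=
  stmt_18_general h α₁ α₂ hh
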